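/- Let a, b ∈ ℂ, set X = ab and Y = a³ + b³, and suppose X² + X + Y ≠ 0, 4(X−1)²(X+1) = (Y+2)², and either X³ + 2X² + X + 2Y = 0 or X³ + 4X² + 2Y − 1 = 0. Then at least one of the matrices M₁₅, M₁₆ has both eigenvalues nonzero and of distinct absolute values, unless both X and Y are real numbers. -/

import Mathlib

/-!
Only `M₁₅` is needed. If its eigenvalues `α, β` had equal modulus, then
`tr² / det = 2 + α / β + β / α` would be real, since `β / α = conj (α / β)`.

Either alternative expresses `Y` as a real polynomial in `X`, so `X` is not real, and the
relation `4 (X - 1)² (X + 1) = (Y + 2)²` then makes `X` a non-real root of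
`X³ + 6X² + 17X + 8`, resp. `X⁴ + 10X³ + 35X² + 34X + 9`. Modulo that polynomial,
`tr² / det` is `(4 - 3y²) / 7` with `y = X + 1`, resp. `4 (3 (y³ - y) + 1) / 49` with
`y = X + 2`. If `v = y²`, resp. `v = y³ - y`, were real, the relation satisfied by `y` would
become a real linear equation `(v + 8) y + 3v - 4 = 0`, resp. `(v - 16) y + 2v + 17 = 0`,
whose coefficients cannot both vanish.
-/

open Matrix

/-- A 2×2 complex matrix has both eigenvalues nonzero and of distinct absolute values:
the eigenvalues are the roots α, β of the characteristic polynomial, equivalently the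
pair with α + β = tr A and α·β = det A. -/
def nonzeroDistinctNormEigenvalues (A : Matrix (Fin 2) (Fin 2) ℂ) : Prop :=
  ∃ α β : ℂ, α + β = A.trace ∧ α * β = A.det ∧ α ≠ 0 ∧ β ≠ 0 ∧
    ‖α‖ ≠ ‖β‖

open ComplexConjugate

theorem im_sq_add_div_mul_eq_zero_of_norm_eq {α β : ℂ} (h : ‖α‖ = ‖β‖) :
    ((α + β) ^ 2 / (α * β)).im = 0 := by
  rcases eq_or_ne α 0 with rfl | hα
  · simp
  have hβ : β ≠ 0 := norm_ne_zero_iff.mp (h ▸ norm_ne_zero_iff.mpr hα)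
  have hαα : α * conj α = (‖β‖ ^ 2 : ℝ) := by
    rw [Complex.mul_conj, Complex.normSq_eq_norm_sq, h]
  have hββ : β * conj β = (‖β‖ ^ 2 : ℝ) := by
    rw [Complex.mul_conj, Complex.normSq_eq_norm_sq]
  rw [← Complex.conj_eq_iff_im, map_div₀,
    div_eq_div_iff (by simp [hα, hβ]) (mul_ne_zero hα hβ)]
  simp only [map_pow, map_add, map_mul]
  linear_combination (conj α * β - α * conj β) * (hαα - hββ)

theorem nonzeroDistinctNormEigenvalues_of_sq_trace_eq_det_mul {A : Matrix (Fin 2) (Fin 2) ℂ}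
    {u : ℂ} (htr : A.trace ≠ 0) (hu : u.im ≠ 0) (h : A.trace ^ 2 = A.det * u) :
    nonzeroDistinctNormEigenvalues A := by
  have hdet : A.det ≠ 0 := fun h0 =>
    htr (pow_eq_zero_iff two_ne_zero |>.mp (by rw [h, h0, zero_mul]))
  obtain ⟨d, hd⟩ := IsAlgClosed.exists_pow_nat_eq (A.trace ^ 2 - 4 * A.det) two_pos
  have hsum : (A.trace + d) / 2 + (A.trace - d) / 2 = A.trace := by ring
  have hprod : (A.trace + d) / 2 * ((A.trace - d) / 2) = A.det := by
    linear_combination (-1 / 4 : ℂ) * hd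
  refine ⟨_, _, hsum, hprod, left_ne_zero_of_mul (hprod ▸ hdet),
    right_ne_zero_of_mul (hprod ▸ hdet), fun hnorm => hu ?_⟩
  have hu' : u = A.trace ^ 2 / A.det := by rw [h, mul_div_cancel_left₀ _ hdet]
  rw [hu', ← hsum, ← hprod]
  exact im_sq_add_div_mul_eq_zero_of_norm_eq hnorm

theorem eq_zero_and_eq_zero_of_mul_add_eq_zero {y a b : ℂ} (hy : y.im ≠ 0) (ha : a.im = 0)
    (hb : b.im = 0) (h : a * y + b = 0) : a = 0 ∧ b = 0 := by
  have hre : a.re * y.im = 0 := by simpa [ha, hb] using congrArg Complex.im h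
  have ha0 : a = 0 := Complex.ext (by simpa [hy] using hre) ha
  exact ⟨ha0, by simpa [ha0] using h⟩

theorem im_sq_ne_zero_of_cubic {y : ℂ} (hy : y.im ≠ 0)
    (h : y ^ 3 + 3 * y ^ 2 + 8 * y - 4 = 0) : (y ^ 2).im ≠ 0 := by
  intro hv
  obtain ⟨h8, h4⟩ := eq_zero_and_eq_zero_of_mul_add_eq_zero
    (a := y ^ 2 + 8) (b := 3 * y ^ 2 - 4) hy (by simp [hv]) (by simp [hv])
    (by linear_combination h)
  have : (28 : ℂ) = 0 := by linear_combination 3 * h8 - h4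
  norm_num at this

theorem im_cube_sub_self_ne_zero_of_quartic {y : ℂ} (hy : y.im ≠ 0)
    (h : y ^ 4 + 2 * y ^ 3 - y ^ 2 - 18 * y + 17 = 0) : (y ^ 3 - y).im ≠ 0 := by
  intro hv
  obtain ⟨h16, h17⟩ := eq_zero_and_eq_zero_of_mul_add_eq_zero
    (a := y ^ 3 - y - 16) (b := 2 * (y ^ 3 - y) + 17) hy (by simp [hv]) (by simp [hv])
    (by linear_combination h)
  have : (49 : ℂ) = 0 := by linear_combination h17 - 2 * h16
  norm_num at this

def M₁₅ (a b : ℂ) : Matrix (Fin 2) (Fin 2) ℂ :=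
  !![a ^ 6 + a ^ 4 * b + 2 * a ^ 3 + a ^ 2 * b ^ 2 + 2 * a * b + b ^ 3,
     a ^ 4 + 3 * a ^ 2 * b + 2 * a * b ^ 3 + b ^ 5 + b ^ 2;
     a ^ 5 + 2 * a ^ 3 * b + a ^ 2 + 3 * a * b ^ 2 + b ^ 4,
     a ^ 3 + a ^ 2 * b ^ 2 + a * b ^ 4 + 2 * a * b + b ^ 6 + 2 * b ^ 3]

theorem trace_M₁₅ {a b X Y : ℂ} (hX : X = a * b) (hY : Y = a ^ 3 + b ^ 3) :
    (M₁₅ a b).trace = Y ^ 2 + X * Y - 2 * X ^ 3 + 2 * X ^ 2 + 4 * X + 3 * Y := by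
  rw [M₁₅, trace_fin_two_of, hX, hY]; ring

theorem det_M₁₅ {a b X Y : ℂ} (hX : X = a * b) (hY : Y = a ^ 3 + b ^ 3) :
    (M₁₅ a b).det = X ^ 6 - 2 * X ^ 5 + 4 * X ^ 4 - 6 * X ^ 3 + 3 * X ^ 2
      + (X ^ 4 + X ^ 3 - 5 * X ^ 2 + 3 * X) * Y + (X - 1) ^ 2 * Y ^ 2 := by
  rw [M₁₅, det_fin_two_of, hX, hY]; ring

theorem nonzeroDistinctNormEigenvalues_M₁₅_of_cubic {a b X Y : ℂ} (hX : X = a * b)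
    (hY : Y = a ^ 3 + b ^ 3) (h4 : 4 * (X - 1) ^ 2 * (X + 1) = (Y + 2) ^ 2)
    (hT : X ^ 3 + 2 * X ^ 2 + X + 2 * Y = 0) (hreal : ¬ (X.im = 0 ∧ Y.im = 0)) :
    nonzeroDistinctNormEigenvalues (M₁₅ a b) := by
  obtain rfl : Y = -(X ^ 3 + 2 * X ^ 2 + X) / 2 := by linear_combination hT / 2
  have hXim : X.im ≠ 0 := fun h => hreal ⟨h, by simp [h, pow_succ]⟩
  have hC : X ^ 3 + 6 * X ^ 2 + 17 * X + 8 = 0 := by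
    have hX0 : X ≠ 0 := fun h => hXim (by simp [h])
    have hX1 : X - 1 ≠ 0 := fun h => hXim (by simp [sub_eq_zero.mp h])
    have : (X - 1) ^ 2 * X * (X ^ 3 + 6 * X ^ 2 + 17 * X + 8) = 0 := by
      linear_combination (-4 : ℂ) * h4
    simpa [hX0, hX1] using this
  have htr : (M₁₅ a b).trace = -4 * (5 * X + 3) * (X + 3) := by
    rw [trace_M₁₅ hX hY]
    linear_combination (X ^ 3 / 4 - X ^ 2 / 2 - X / 4 + 9 / 2) * hC
  have hdet : (M₁₅ a b).det = -16 * (41 * X ^ 2 + 206 * X + 105) := by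
    rw [det_M₁₅ hX hY]
    linear_combination
      (X ^ 5 / 4 - 3 * X ^ 4 / 2 + 4 * X ^ 3 - 5 * X ^ 2 / 2 - 137 * X / 4 + 210) * hC
  refine nonzeroDistinctNormEigenvalues_of_sq_trace_eq_det_mul (u := (4 - 3 * (X + 1) ^ 2) / 7)
    ?_ ?_ ?_
  · rw [htr]
    refine mul_ne_zero (mul_ne_zero (by norm_num) fun h => hXim ?_) fun h => hXim ?_ <;>
      simpa using congrArg Complex.im h
  · have := im_sq_ne_zero_of_cubic (y := X + 1) (by simpa using hXim) (by linear_combination hC)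
    simpa using this
  · rw [htr, hdet]
    linear_combination (832 * X / 7 + 192) * hC

theorem nonzeroDistinctNormEigenvalues_M₁₅_of_quartic {a b X Y : ℂ} (hX : X = a * b)
    (hY : Y = a ^ 3 + b ^ 3) (h4 : 4 * (X - 1) ^ 2 * (X + 1) = (Y + 2) ^ 2)
    (hU : X ^ 3 + 4 * X ^ 2 + 2 * Y - 1 = 0) (hreal : ¬ (X.im = 0 ∧ Y.im = 0)) :
    nonzeroDistinctNormEigenvalues (M₁₅ a b) := by
  obtain rfl : Y = -(X ^ 3 + 4 * X ^ 2 - 1) / 2 := by linear_combination hU / 2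
  have hXim : X.im ≠ 0 := fun h => hreal ⟨h, by simp [h, pow_succ]⟩
  have hC : X ^ 4 + 10 * X ^ 3 + 35 * X ^ 2 + 34 * X + 9 = 0 := by
    have hX1 : X - 1 ≠ 0 := fun h => hXim (by simp [sub_eq_zero.mp h])
    have : (X - 1) ^ 2 * (X ^ 4 + 10 * X ^ 3 + 35 * X ^ 2 + 34 * X + 9) = 0 := by
      linear_combination (-4 : ℂ) * h4
    simpa [hX1] using this
  have htr : (M₁₅ a b).trace = (11 * X ^ 3 + 35 * X ^ 2 + 35 * X + 8) / 2 := by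
    rw [trace_M₁₅ hX hY]
    linear_combination (X ^ 2 / 4 - X / 2 - 1 / 4) * hC
  have hdet : (M₁₅ a b).det = (56 * X ^ 3 - 1223 * X ^ 2 - 1769 * X - 535) / 2 := by
    rw [det_M₁₅ hX hY]
    linear_combination (X ^ 4 / 4 - 3 * X ^ 3 / 2 + 5 * X ^ 2 - 14 * X + 119 / 4) * hC
  refine nonzeroDistinctNormEigenvalues_of_sq_trace_eq_det_mul
    (u := 4 * (3 * ((X + 2) ^ 3 - (X + 2)) + 1) / 49) ?_ ?_ ?_
  · rw [htr]
    intro h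
    -- Bézout identity: the trace is a unit modulo the quartic.
    have : (126736 : ℂ) = 0 := by
      linear_combination
        (-2 * (3851 * X ^ 3 + 39246 * X ^ 2 + 139766 * X + 135331)) * h
          + (42361 * X ^ 2 + 142881 * X + 134376) * hC
    norm_num at this
  · have := im_cube_sub_self_ne_zero_of_quartic (y := X + 2) (by simpa using hXim)
      (by linear_combination hC)
    simpa using this
  · rw [htr, hdet]
    linear_combination (655 * X ^ 2 / 28 + 3292 * X / 49 + 2346 / 49) * hC

theorem stmt_14_general (a b X Y : ℂ) (hX : X = a * b) (hY : Y = a ^ 3 + b ^ 3)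
    (h4 : 4 * (X - 1) ^ 2 * (X + 1) = (Y + 2) ^ 2)
    (hTU : X ^ 3 + 2 * X ^ 2 + X + 2 * Y = 0 ∨ X ^ 3 + 4 * X ^ 2 + 2 * Y - 1 = 0)
    (hreal : ¬ (X.im = 0 ∧ Y.im = 0)) :
    nonzeroDistinctNormEigenvalues
        !![a ^ 6 + a ^ 4 * b + 2 * a ^ 3 + a ^ 2 * b ^ 2 + 2 * a * b + b ^ 3,
           a ^ 4 + 3 * a ^ 2 * b + 2 * a * b ^ 3 + b ^ 5 + b ^ 2;
           a ^ 5 + 2 * a ^ 3 * b + a ^ 2 + 3 * a * b ^ 2 + b ^ 4,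
           a ^ 3 + a ^ 2 * b ^ 2 + a * b ^ 4 + 2 * a * b + b ^ 6 + 2 * b ^ 3] ∨
      nonzeroDistinctNormEigenvalues
        !![a ^ 6 + a ^ 4 * b + 2 * a ^ 3 + a ^ 2 * b ^ 2 + 2 * a * b + b ^ 3,
           a ^ 4 + a ^ 3 * b ^ 2 + a ^ 2 * b + 2 * a * b ^ 3 + a + b ^ 5 + b ^ 2;
           a ^ 5 + 2 * a ^ 3 * b + a ^ 2 * b ^ 3 + a ^ 2 + a * b ^ 2 + b ^ 4 + b,
           a ^ 3 + a ^ 2 * b ^ 2 + a * b ^ 4 + 2 * a * b + b ^ 6 + 2 * b ^ 3] := by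
  left
  rcases hTU with hT | hU
  · exact nonzeroDistinctNormEigenvalues_M₁₅_of_cubic hX hY h4 hT hreal
  · exact nonzeroDistinctNormEigenvalues_M₁₅_of_quartic hX hY h4 hU hreal

theorem stmt_14 (a b X Y : ℂ) (hX : X = a * b) (hY : Y = a ^ 3 + b ^ 3)
    (hXY : X ^ 2 + X + Y ≠ 0)
    (h4 : 4 * (X - 1) ^ 2 * (X + 1) = (Y + 2) ^ 2)
    (hTU : X ^ 3 + 2 * X ^ 2 + X + 2 * Y = 0 ∨ X ^ 3 + 4 * X ^ 2 + 2 * Y - 1 = 0)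
    (hreal : ¬ (X.im = 0 ∧ Y.im = 0)) :
    nonzeroDistinctNormEigenvalues
        !![a ^ 6 + a ^ 4 * b + 2 * a ^ 3 + a ^ 2 * b ^ 2 + 2 * a * b + b ^ 3,
           a ^ 4 + 3 * a ^ 2 * b + 2 * a * b ^ 3 + b ^ 5 + b ^ 2;
           a ^ 5 + 2 * a ^ 3 * b + a ^ 2 + 3 * a * b ^ 2 + b ^ 4,
           a ^ 3 + a ^ 2 * b ^ 2 + a * b ^ 4 + 2 * a * b + b ^ 6 + 2 * b ^ 3] ∨
      nonzeroDistinctNormEigenvalues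
        !![a ^ 6 + a ^ 4 * b + 2 * a ^ 3 + a ^ 2 * b ^ 2 + 2 * a * b + b ^ 3,
           a ^ 4 + a ^ 3 * b ^ 2 + a ^ 2 * b + 2 * a * b ^ 3 + a + b ^ 5 + b ^ 2;
           a ^ 5 + 2 * a ^ 3 * b + a ^ 2 * b ^ 3 + a ^ 2 + a * b ^ 2 + b ^ 4 + b,
           a ^ 3 + a ^ 2 * b ^ 2 + a * b ^ 4 + 2 * a * b + b ^ 6 + 2 * b ^ 3] :=
  stmt_14_general a b X Y hX hY h4 hTU hreal
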